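/- Let G be a connected non-complete simple graph that is 2K2-free, C3-free and C4-free, let S be any minimal vertex separator of G, and let G1 be a non-trivial connected component of G − S. Then for every edge {u,v} of G1, the sets N_G(u) ∩ S and N_G(v) ∩ S are disjoint and their union equals S; equivalently, every vertex of S is adjacent to exactly one of u and v. -/

import Mathlib

open SimpleGraph

/-- A simple graph is `2K₂`-free: there are no four pairwise distinct vertices `a b c d`
with `ab` and `cd` edges and none of `ac, ad, bc, bd` an edge. -/
def TwoK2Free {V : Type*} (G : SimpleGraph V) : Prop :=
  ¬ ∃ a b c d : V, a ≠ b ∧ a ≠ c ∧ a ≠ d ∧ b ≠ c ∧ b ≠ d ∧ c ≠ d ∧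
    G.Adj a b ∧ G.Adj c d ∧ ¬ G.Adj a c ∧ ¬ G.Adj a d ∧ ¬ G.Adj b c ∧ ¬ G.Adj b d

/-- `S ⊊ V(G)` is a vertex separator: deleting `S` leaves a disconnected graph. -/
def IsSeparator {V : Type*} (G : SimpleGraph V) (S : Set V) : Prop :=
  S ≠ Set.univ ∧ ¬ (G.induce (Sᶜ : Set V)).Connected

/-- A minimal vertex separator: no proper subset is a separator. -/
def IsMinSeparator {V : Type*} (G : SimpleGraph V) (S : Set V) : Prop :=
  IsSeparator G S ∧ ∀ S' : Set V, S' ⊂ S → ¬ IsSeparator G S'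

/-- A connected component is trivial if its support is a single vertex. -/
def IsTrivialComp {α : Type*} {H : SimpleGraph α} (C : H.ConnectedComponent) : Prop :=
  ∃ v, C.supp = {v}

/-- `G` has no induced cycle on `n` vertices. -/
def NoInducedCycle {V : Type*} (n : ℕ) (G : SimpleGraph V) : Prop :=
  ¬ Nonempty (cycleGraph n ↪g G)

/-!
Two neighbours `u, v` in `G - S` have no common neighbour in `S`, since a triangle is an induced
`C₃`. Conversely, if `s ∈ S` were adjacent to neither, pick a component of `G - S` other than
that of `u`; minimality of `S` gives `s` a neighbour `z` there (otherwise `S \ {s}` would still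
separate that component), and `z` is adjacent to neither `u` nor `v`, so `uv, sz` is an
induced `2K₂`.
-/

theorem SimpleGraph.exists_not_reachable_of_not_connected {α : Type*} {H : SimpleGraph α}
    (h : ¬ H.Connected) (a : α) : ∃ b, ¬ H.Reachable a b := by
  by_contra! hall
  exact h ((connected_iff_exists_forall_reachable H).2 ⟨a, hall⟩)

section

variable {V : Type*} {G : SimpleGraph V}

theorem NoInducedCycle.cliqueFree_three (h : NoInducedCycle 3 G) : G.CliqueFree 3 := by
  by_contra hG
  exact h ⟨cycleGraph_three_eq_top ▸ topEmbeddingOfNotCliqueFree hG⟩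

theorem TwoK2Free.adj_of_adj_of_adj (h : TwoK2Free G) {a b c d : V} (hab : G.Adj a b)
    (hcd : G.Adj c d) : G.Adj a c ∨ G.Adj a d ∨ G.Adj b c ∨ G.Adj b d := by
  by_contra! hno
  obtain ⟨hac, had, hbc, hbd⟩ := hno
  refine h ⟨a, b, c, d, hab.ne, ?_, ?_, ?_, ?_, hcd.ne, hab, hcd, hac, had, hbc, hbd⟩
  · rintro rfl; exact had hcd
  · rintro rfl; exact hac hcd.symm
  · rintro rfl; exact hbd hcd
  · rintro rfl; exact hbc hcd.symm

theorem IsMinSeparator.exists_adj_mem_supp {S : Set V} (hS : IsMinSeparator G S) {s : V}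
    (hs : s ∈ S) (C : (G.induce (Sᶜ : Set V)).ConnectedComponent) :
    ∃ z : (Sᶜ : Set V), z ∈ C.supp ∧ G.Adj s z := by
  obtain ⟨b, rfl⟩ := C.exists_rep
  set H := G.induce (Sᶜ : Set V)
  obtain ⟨u, hbu⟩ := exists_not_reachable_of_not_connected hS.1.2 b
  have hsub : S \ {s} ⊂ S := Set.sdiff_singleton_ssubset.2 hs
  have hconn : (G.induce ((S \ {s})ᶜ : Set V)).Connected := by
    by_contra hdisc
    refine hS.2 _ hsub ⟨fun huniv => ?_, hdisc⟩
    exact u.2 (huniv ▸ Set.mem_univ (u : V)).1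
  obtain ⟨walk⟩ := hconn.preconnected ⟨b, fun h => b.2 h.1⟩ ⟨u, fun h => u.2 h.1⟩
  -- Leave the component of `b` along a walk avoiding `S \ {s}`: the exit edge must enter `s`.
  let R : Set ((S \ {s})ᶜ : Set V) := {x | ∃ hx : (x : V) ∈ Sᶜ, H.Reachable b ⟨x, hx⟩}
  obtain ⟨d, -, ⟨hxS, hbx⟩, hy⟩ :=
    walk.exists_boundary_dart R ⟨b.2, .refl _⟩ fun ⟨_, hbu'⟩ => hbu hbu'
  have hys : (d.snd : V) = s := by
    by_contra hne
    have hyS : (d.snd : V) ∈ Sᶜ := fun h => d.snd.2 ⟨h, hne⟩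
    exact hy ⟨hyS, hbx.trans (Adj.reachable (G := H) d.adj)⟩
  have hadj : G.Adj d.fst d.snd := d.adj
  rw [hys] at hadj
  exact ⟨⟨d.fst, hxS⟩, ConnectedComponent.eq.2 hbx.symm, hadj.symm⟩

end

theorem edge_neighborhoods_partition_separator_general {V : Type*} (G : SimpleGraph V)
    (h2k2 : TwoK2Free G) (hc3 : NoInducedCycle 3 G)
    (S : Set V) (hS : IsMinSeparator G S)
    (G1 : (G.induce (Sᶜ : Set V)).ConnectedComponent) :
    ∀ u v : (Sᶜ : Set V), u ∈ G1.supp → v ∈ G1.supp →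
      (G.induce (Sᶜ : Set V)).Adj u v →
      (G.neighborSet (u : V) ∩ S) ∩ (G.neighborSet (v : V) ∩ S) = ∅ ∧
      (G.neighborSet (u : V) ∩ S) ∪ (G.neighborSet (v : V) ∩ S) = S := by
  intro u v _ _ huv
  set H := G.induce (Sᶜ : Set V)
  refine ⟨Set.eq_empty_of_forall_notMem ?_, ?_⟩
  · rintro s ⟨⟨hus, -⟩, hvs, hs⟩
    exact isIndepSet_neighborSet_of_triangleFree G hc3.cliqueFree_three u
      (huv : G.Adj u v) hus (by rintro rfl; exact v.2 hs) hvs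
  refine (Set.union_subset Set.inter_subset_right Set.inter_subset_right).antisymm
    fun s hs => ?_
  by_contra hcover
  obtain ⟨b, hub⟩ := exists_not_reachable_of_not_connected hS.1.2 u
  obtain ⟨z, hz, hsz⟩ := hS.exists_adj_mem_supp hs (H.connectedComponentMk b)
  have hzb : H.Reachable z b := ConnectedComponent.eq.1 hz
  rcases h2k2.adj_of_adj_of_adj (huv : G.Adj u v) hsz with hus | huz | hvs | hvz
  · exact hcover (.inl ⟨hus, hs⟩)
  · exact hub ((Adj.reachable (G := H) huz).trans hzb)
  · exact hcover (.inr ⟨hvs, hs⟩)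
  · exact hub ((huv.reachable.trans (Adj.reachable (G := H) hvz)).trans hzb)

/-- In a connected non-complete `(2K₂, C₃, C₄)`-free graph with minimal vertex separator `S`
and non-trivial component `G₁` of `G − S`: for every edge `{u,v}` of `G₁`, the sets
`N(u) ∩ S` and `N(v) ∩ S` are disjoint and their union is `S`. -/
theorem edge_neighborhoods_partition_separator {V : Type*} (G : SimpleGraph V)
    (hconn : G.Connected) (hnc : ∃ u v : V, u ≠ v ∧ ¬ G.Adj u v)
    (h2k2 : TwoK2Free G) (hc3 : NoInducedCycle 3 G) (hc4 : NoInducedCycle 4 G)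
    (S : Set V) (hS : IsMinSeparator G S)
    (G1 : (G.induce (Sᶜ : Set V)).ConnectedComponent) (hG1 : ¬ IsTrivialComp G1) :
    ∀ u v : (Sᶜ : Set V), u ∈ G1.supp → v ∈ G1.supp →
      (G.induce (Sᶜ : Set V)).Adj u v →
      (G.neighborSet (u : V) ∩ S) ∩ (G.neighborSet (v : V) ∩ S) = ∅ ∧
      (G.neighborSet (u : V) ∩ S) ∪ (G.neighborSet (v : V) ∩ S) = S :=
  edge_neighborhoods_partition_separator_general G h2k2 hc3 S hS G1
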